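/- Let γ = γ_{0,...,0} ∈ Sp_{2kn}(F) be the block permutation matrix with μ_i = 0, ε_i = 1_n (from Lemma 5.1 with all r_i = 0), let η_0 be the block matrix diag(J'_{k}⊗1_n-type permutation) = [[antidiag(1_n,...,1_n), 0],[0, antidiag(1_n,...,1_n)]] of size 2kn (with k blocks of 1_n on each antidiagonal), and let η = [[0,1_n,0,0],[0,0,0,−1_{(k−1)n}],[1_{(k−1)n},0,0,0],[0,0,1_n,0]]. Then for every u_0 ∈ N(F) of the form (6) with superdiagonal data v_{1,2},...,v_{k−2,k−1}, y, there exists an upper-triangular unipotent u_0' ∈ Sp_{2kn}(F) (explicitly given, with blocks −y*, −v_{i,i+1}* above the diagonal in the first kn rows and v_{i,i+1}, y in the last kn rows) such that η_0 γ u_0 = u_0' η. -/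

import Mathlib

/-!
`η₀` and `γ` are signed block permutation matrices whose product is `η`, and a signed
permutation matrix is orthogonal. Hence `η₀ γ u₀ = η u₀ = (η u₀ ηᵀ) η`, and `u₀' := η u₀ ηᵀ`.
Conjugation by `η` puts `± u₀`'s block `(σ i, σ j)` at position `(i, j)`, where `σ` is the block
permutation of `η`; this `σ` turns the zero pattern of `N` into block upper triangularity and
carries the free blocks `v`, `y` of `u₀` (and their starred copies) to the superdiagonal.
Since `η` fixes the symplectic form, `u₀'` is symplectic.
-/

open Matrix

variable (F : Type*) [Field F]

/-- The `m × m` matrix with ones on the antidiagonal and zeros elsewhere. -/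
def Jmat (m : ℕ) : Matrix (Fin m) (Fin m) F :=
  Matrix.of fun i j => if (i : ℕ) + (j : ℕ) + 1 = m then 1 else 0

/-- `x* = J_n xᵀ J_n`. -/
def matStar (n : ℕ) (x : Matrix (Fin n) (Fin n) F) : Matrix (Fin n) (Fin n) F :=
  Jmat F n * xᵀ * Jmat F n

/-- The `(i,j)` block (of size `n × n`) of a matrix indexed by `Fin (2k) × Fin n`. -/
def blk {k n : ℕ} (u : Matrix (Fin (2 * k) × Fin n) (Fin (2 * k) × Fin n) F)
    (i j : Fin (2 * k)) : Matrix (Fin n) (Fin n) F :=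
  Matrix.of fun r s => u (i, r) (j, s)

/-- The matrix of the symplectic form `[[0, J_{kn}], [−J_{kn}, 0]]` defining `Sp_{2kn}`,
in `n`-block coordinates. -/
def OmegaB (k n : ℕ) : Matrix (Fin (2 * k) × Fin n) (Fin (2 * k) × Fin n) F :=
  Matrix.of fun p q =>
    if (p.1 : ℕ) + (q.1 : ℕ) + 1 = 2 * k ∧ (p.2 : ℕ) + (q.2 : ℕ) + 1 = n then
      (if (p.1 : ℕ) < k then 1 else -1)
    else 0

/-- `Sp_{2kn}(F)` in `n`-block coordinates. -/
def SpB (k n : ℕ) : Set (Matrix (Fin (2 * k) × Fin n) (Fin (2 * k) × Fin n) F) :=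
  {g | IsUnit g ∧ gᵀ * OmegaB F k n * g = OmegaB F k n}

/-- The block matrix `η = [[0,1_n,0,0],[0,0,0,−1_{(k−1)n}],[1_{(k−1)n},0,0,0],[0,0,1_n,0]]`
(block rows of sizes `n, (k−1)n, (k−1)n, n`). -/
def etaMat (k n : ℕ) : Matrix (Fin (2 * k) × Fin n) (Fin (2 * k) × Fin n) F :=
  Matrix.of fun p q =>
    if p.2 = q.2 then
      (if (p.1 : ℕ) = 0 ∧ (q.1 : ℕ) + 1 = k then 1
       else if 1 ≤ (p.1 : ℕ) ∧ (p.1 : ℕ) + 1 ≤ k ∧ (q.1 : ℕ) = k + (p.1 : ℕ) then -1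
       else if k ≤ (p.1 : ℕ) ∧ (p.1 : ℕ) + 2 ≤ 2 * k ∧ (q.1 : ℕ) + k = (p.1 : ℕ) then 1
       else if (p.1 : ℕ) + 1 = 2 * k ∧ (q.1 : ℕ) = k then 1
       else 0)
    else 0

/-- `η₀ = diag(antidiag(1_n,…,1_n), antidiag(1_n,…,1_n))` (two antidiagonal blocks of `k`
copies of `1_n` each). -/
def eta0Mat (k n : ℕ) : Matrix (Fin (2 * k) × Fin n) (Fin (2 * k) × Fin n) F :=
  Matrix.of fun p q =>
    if p.2 = q.2 ∧
        (((p.1 : ℕ) < k ∧ (q.1 : ℕ) < k ∧ (p.1 : ℕ) + (q.1 : ℕ) + 1 = k) ∨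
          (k ≤ (p.1 : ℕ) ∧ k ≤ (q.1 : ℕ) ∧ (p.1 : ℕ) + (q.1 : ℕ) + 1 = 3 * k)) then
      1
    else 0

/-- `γ = γ_{0,…,0}`, the representative of Lemma 5.1 with all `rᵢ = 0`: it has `1_{2n}`
in the central diagonal blocks, `−1_n` at block positions `(k−1−t, k+t)`, and `1_n` at
block positions `(k+t, k−1−t)` for `1 ≤ t ≤ k−1`. -/
def gammaMat (k n : ℕ) : Matrix (Fin (2 * k) × Fin n) (Fin (2 * k) × Fin n) F :=
  Matrix.of fun p q =>
    if p.2 = q.2 then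
      (if p.1 = q.1 ∧ ((p.1 : ℕ) + 1 = k ∨ (p.1 : ℕ) = k) then 1
       else if (p.1 : ℕ) + (q.1 : ℕ) + 1 = 2 * k ∧ (p.1 : ℕ) + 2 ≤ k then -1
       else if (p.1 : ℕ) + (q.1 : ℕ) + 1 = 2 * k ∧ (q.1 : ℕ) + 2 ≤ k then 1
       else 0)
    else 0

/-- Membership in the unipotent subgroup `N` of Section 5 (displayed in equation
(eq-unipotent-N)): a symplectic, block upper-triangular unipotent matrix whose blocks
satisfy the zero pattern and the compatibility relations of the display, with free data
`v_{1,2}, …, v_{k−2,k−1}` (the first `k−2` superdiagonal blocks) and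
`y` (the block in position `(k−1, k+1)`, 1-indexed). -/
def InN (k n : ℕ) (u : Matrix (Fin (2 * k) × Fin n) (Fin (2 * k) × Fin n) F) : Prop :=
  u ∈ SpB F k n ∧
  (∀ i j : Fin (2 * k), (j : ℕ) < (i : ℕ) → blk F u i j = 0) ∧
  (∀ i : Fin (2 * k), blk F u i i = 1) ∧
  (∀ i j : Fin (2 * k), (i : ℕ) + 2 ≤ k →
    ((j : ℕ) + 1 = k ∨ k + 1 ≤ (j : ℕ)) → blk F u i j = 0) ∧
  (∀ i j : Fin (2 * k), (i : ℕ) + 1 = k → (j : ℕ) = k → blk F u i j = 0) ∧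
  (∀ i j : Fin (2 * k), (i : ℕ) = k → k + 1 ≤ (j : ℕ) → blk F u i j = 0) ∧
  (∀ i j i' j' : Fin (2 * k), (i : ℕ) + 1 = k → (j : ℕ) = k + 1 →
    (i' : ℕ) + 2 = k → (j' : ℕ) = k →
    blk F u i j = matStar F n (blk F u i' j')) ∧
  (∀ i j i' j' : Fin (2 * k), k + 1 ≤ (i : ℕ) → (i : ℕ) + 2 ≤ 2 * k →
    (j : ℕ) = (i : ℕ) + 1 → (i : ℕ) + (i' : ℕ) + 2 = 2 * k → (j' : ℕ) = (i' : ℕ) + 1 →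
    blk F u i j = -(matStar F n (blk F u i' j')))

section
variable {R ι κ : Type*} [DecidableEq ι] [DecidableEq κ]

def signedBlockPerm [Zero R] (σ : ι → ι) (c : ι → R) : Matrix (ι × κ) (ι × κ) R :=
  of fun p q => if q.1 = σ p.1 ∧ p.2 = q.2 then c p.1 else 0

variable [Fintype ι] [Fintype κ]

theorem signedBlockPerm_mul_apply [Semiring R] (σ : ι → ι) (c : ι → R)
    (M : Matrix (ι × κ) (ι × κ) R) (p q : ι × κ) :
    (signedBlockPerm σ c * M : Matrix (ι × κ) (ι × κ) R) p q = c p.1 * M (σ p.1, p.2) q := by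
  rw [mul_apply, Finset.sum_eq_single (σ p.1, p.2)]
  · simp [signedBlockPerm]
  · rintro r - hr
    rw [signedBlockPerm, of_apply, if_neg, zero_mul]
    rintro ⟨h1, h2⟩
    exact hr (Prod.ext h1 h2.symm)
  · simp

theorem mul_transpose_signedBlockPerm_apply [Semiring R] (σ : ι → ι) (c : ι → R)
    (M : Matrix (ι × κ) (ι × κ) R) (p q : ι × κ) :
    (M * (signedBlockPerm σ c)ᵀ : Matrix (ι × κ) (ι × κ) R) p q = M p (σ q.1, q.2) * c q.1 := by
  rw [mul_apply, Finset.sum_eq_single (σ q.1, q.2)]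
  · simp [signedBlockPerm]
  · rintro r - hr
    rw [transpose_apply, signedBlockPerm, of_apply, if_neg, mul_zero]
    rintro ⟨h1, h2⟩
    exact hr (Prod.ext h1 h2.symm)
  · simp

theorem signedBlockPerm_mul_mul_transpose_apply [Semiring R] (σ : ι → ι) (c : ι → R)
    (M : Matrix (ι × κ) (ι × κ) R) (p q : ι × κ) :
    (signedBlockPerm σ c * M * (signedBlockPerm σ c)ᵀ : Matrix (ι × κ) (ι × κ) R) p q
      = c p.1 * M (σ p.1, p.2) (σ q.1, q.2) * c q.1 := by
  rw [mul_transpose_signedBlockPerm_apply, signedBlockPerm_mul_apply]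

theorem signedBlockPerm_mul_transpose_self [Semiring R] {σ : ι → ι} (hσ : σ.Injective)
    {c : ι → R} (hc : ∀ i, c i * c i = 1) :
    signedBlockPerm σ c * (signedBlockPerm σ c)ᵀ = (1 : Matrix (ι × κ) (ι × κ) R) := by
  ext p q
  rw [mul_transpose_signedBlockPerm_apply, signedBlockPerm, of_apply, one_apply]
  by_cases hpq : p = q
  · subst hpq; simp [hc]
  · rw [if_neg, if_neg hpq, zero_mul]
    rintro ⟨h1, h2⟩
    exact hpq (Prod.ext (hσ h1).symm h2)

end

theorem conj_by_orthogonal_preserves_form {m R : Type*} [Fintype m] [DecidableEq m] [CommSemiring R]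
    {A U Ω : Matrix m m R} (hA : A * Ω * Aᵀ = Ω) (hAA : Aᵀ * A = 1) (hU : Uᵀ * Ω * U = Ω) :
    (A * U * Aᵀ)ᵀ * Ω * (A * U * Aᵀ) = Ω := by
  have hA' : Aᵀ * Ω * A = Ω := by
    calc Aᵀ * Ω * A = Aᵀ * (A * Ω * Aᵀ) * A := by rw [hA]
      _ = (Aᵀ * A) * Ω * (Aᵀ * A) := by simp only [Matrix.mul_assoc]
      _ = Ω := by rw [hAA, Matrix.one_mul, Matrix.mul_one]
  calc (A * U * Aᵀ)ᵀ * Ω * (A * U * Aᵀ) = A * (Uᵀ * (Aᵀ * Ω * A) * U) * Aᵀ := by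
        simp only [transpose_mul, transpose_transpose, Matrix.mul_assoc]
    _ = Ω := by rw [hA', hU, hA]

section
variable {F}

def etaIdx (k : ℕ) (p : Fin (2 * k)) : Fin (2 * k) :=
  ⟨if (p : ℕ) = 0 then k - 1 else if (p : ℕ) < k then k + p
    else if (p : ℕ) + 1 < 2 * k then p - k else k, by split_ifs <;> omega⟩

variable (F) in
def etaSign (k : ℕ) (p : Fin (2 * k)) : F := if 1 ≤ (p : ℕ) ∧ (p : ℕ) < k then -1 else 1

def eta0Idx (k : ℕ) (p : Fin (2 * k)) : Fin (2 * k) :=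
  ⟨if (p : ℕ) < k then k - 1 - p else 3 * k - 1 - p, by split_ifs <;> omega⟩

variable {k n : ℕ}

theorem etaMat_eq_signedBlockPerm :
    etaMat F k n = signedBlockPerm (etaIdx k) (etaSign F k) := by
  ext ⟨p, r⟩ ⟨q, s⟩
  have := p.isLt
  simp only [etaMat, signedBlockPerm, etaIdx, etaSign, of_apply, Fin.ext_iff]
  split_ifs <;> first | rfl | omega

theorem eta0Mat_eq_signedBlockPerm :
    eta0Mat F k n = signedBlockPerm (eta0Idx k) 1 := by
  ext ⟨p, r⟩ ⟨q, s⟩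
  have := p.isLt
  have := q.isLt
  simp only [eta0Mat, signedBlockPerm, eta0Idx, Pi.one_apply, of_apply, Fin.ext_iff]
  split_ifs <;> first | rfl | omega

theorem eta0Mat_mul_gammaMat : eta0Mat F k n * gammaMat F k n = etaMat F k n := by
  ext ⟨p, r⟩ ⟨q, s⟩
  have := p.isLt
  have := q.isLt
  rw [eta0Mat_eq_signedBlockPerm, signedBlockPerm_mul_apply]
  simp only [gammaMat, etaMat, eta0Idx, Pi.one_apply, one_mul, of_apply, Fin.ext_iff]
  split_ifs <;> first | rfl | omega

theorem etaIdx_injective : (etaIdx k).Injective := by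
  intro p q h
  have := p.isLt
  have := q.isLt
  simp only [etaIdx, Fin.ext_iff] at h
  ext
  split_ifs at h <;> omega

theorem etaSign_mul_self (p : Fin (2 * k)) : etaSign F k p * etaSign F k p = 1 := by
  unfold etaSign; split_ifs <;> norm_num

theorem etaMat_mul_OmegaB_mul_transpose :
    etaMat F k n * OmegaB F k n * (etaMat F k n)ᵀ = OmegaB F k n := by
  ext ⟨p, r⟩ ⟨q, s⟩
  have := p.isLt
  have := q.isLt
  rw [etaMat_eq_signedBlockPerm, signedBlockPerm_mul_mul_transpose_apply]
  simp only [OmegaB, etaIdx, etaSign, of_apply]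
  split_ifs <;> first | omega | norm_num

theorem etaMat_mul_transpose_self : etaMat F k n * (etaMat F k n)ᵀ = 1 := by
  rw [etaMat_eq_signedBlockPerm]
  exact signedBlockPerm_mul_transpose_self etaIdx_injective etaSign_mul_self

theorem etaMat_transpose_mul_self : (etaMat F k n)ᵀ * etaMat F k n = 1 :=
  mul_eq_one_comm.mp etaMat_mul_transpose_self

theorem etaMat_conj_mem_SpB {u : Matrix (Fin (2 * k) × Fin n) (Fin (2 * k) × Fin n) F}
    (hu : u ∈ SpB F k n) : etaMat F k n * u * (etaMat F k n)ᵀ ∈ SpB F k n :=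
  ⟨((IsUnit.of_mul_eq_one _ etaMat_mul_transpose_self).mul hu.1).mul
      (IsUnit.of_mul_eq_one _ etaMat_transpose_mul_self),
    conj_by_orthogonal_preserves_form etaMat_mul_OmegaB_mul_transpose
      etaMat_transpose_mul_self hu.2⟩

theorem blk_etaMat_conj (u : Matrix (Fin (2 * k) × Fin n) (Fin (2 * k) × Fin n) F)
    (i j : Fin (2 * k)) :
    blk F (etaMat F k n * u * (etaMat F k n)ᵀ) i j
      = (etaSign F k i * etaSign F k j) • blk F u (etaIdx k i) (etaIdx k j) := by
  ext r s
  rw [blk, of_apply, etaMat_eq_signedBlockPerm, signedBlockPerm_mul_mul_transpose_apply,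
    Matrix.smul_apply, blk, of_apply, smul_eq_mul]
  ring

theorem etaSign_of_lt {p : Fin (2 * k)} (h1 : 1 ≤ (p : ℕ)) (h2 : (p : ℕ) < k) :
    etaSign F k p = -1 :=
  if_pos ⟨h1, h2⟩

theorem etaSign_of_not_lt {p : Fin (2 * k)} (h : ¬(1 ≤ (p : ℕ) ∧ (p : ℕ) < k)) :
    etaSign F k p = 1 :=
  if_neg h

theorem blk_etaMat_conj_of_le {u : Matrix (Fin (2 * k) × Fin n) (Fin (2 * k) × Fin n) F}
    {i j i' j' : Fin (2 * k)} (hi : k ≤ (i : ℕ)) (hj : k ≤ (j : ℕ)) (hi' : etaIdx k i = i')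
    (hj' : etaIdx k j = j') :
    blk F (etaMat F k n * u * (etaMat F k n)ᵀ) i j = blk F u i' j' := by
  rw [blk_etaMat_conj, hi', hj', etaSign_of_not_lt (by omega), etaSign_of_not_lt (by omega),
    one_mul, one_smul]

theorem InN.blk_etaIdx_eq_zero_of_lt {u : Matrix (Fin (2 * k) × Fin n) (Fin (2 * k) × Fin n) F}
    (hu : InN F k n u) {i j : Fin (2 * k)} (hij : (j : ℕ) < i) :
    blk F u (etaIdx k i) (etaIdx k j) = 0 := by
  obtain ⟨-, hlow, -, hz, -, hz', -⟩ := hu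
  have := i.isLt
  have : (etaIdx k j : ℕ) < etaIdx k i ∨
      ((etaIdx k i : ℕ) + 2 ≤ k ∧ ((etaIdx k j : ℕ) + 1 = k ∨ k + 1 ≤ (etaIdx k j : ℕ))) ∨
      ((etaIdx k i : ℕ) = k ∧ k + 1 ≤ (etaIdx k j : ℕ)) := by
    simp only [etaIdx]
    split_ifs <;> omega
  rcases this with h | ⟨h1, h2⟩ | ⟨h1, h2⟩
  exacts [hlow _ _ h, hz _ _ h1 h2, hz' _ _ h1 h2]

end

theorem stmt18 (k n : ℕ) (hk : 2 ≤ k)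
    (u0 : Matrix (Fin (2 * k) × Fin n) (Fin (2 * k) × Fin n) F)
    (hu0 : InN F k n u0) :
    ∃ u0' : Matrix (Fin (2 * k) × Fin n) (Fin (2 * k) × Fin n) F,
      (∀ i j : Fin (2 * k), (j : ℕ) < (i : ℕ) → blk F u0' i j = 0) ∧
      (∀ i : Fin (2 * k), blk F u0' i i = 1) ∧
      u0' ∈ SpB F k n ∧
      (∀ i j i' j' : Fin (2 * k), (i : ℕ) = 0 → (j : ℕ) = 1 →
        (i' : ℕ) + 2 = k → (j' : ℕ) = k →
        blk F u0' i j = -(matStar F n (blk F u0 i' j'))) ∧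
      (∀ i j i' j' : Fin (2 * k), 1 ≤ (i : ℕ) → (i : ℕ) + 2 ≤ k →
        (j : ℕ) = (i : ℕ) + 1 → (i : ℕ) + (i' : ℕ) + 2 = k → (j' : ℕ) = (i' : ℕ) + 1 →
        blk F u0' i j = -(matStar F n (blk F u0 i' j'))) ∧
      (∀ i j : Fin (2 * k), (i : ℕ) + 1 = k → (j : ℕ) = k → blk F u0' i j = 0) ∧
      (∀ i j i' j' : Fin (2 * k), k ≤ (i : ℕ) → (i : ℕ) + 3 ≤ 2 * k →
        (j : ℕ) = (i : ℕ) + 1 → (i' : ℕ) + k = (i : ℕ) → (j' : ℕ) = (i' : ℕ) + 1 →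
        blk F u0' i j = blk F u0 i' j') ∧
      (∀ i j i' j' : Fin (2 * k), (i : ℕ) + 2 = 2 * k → (j : ℕ) + 1 = 2 * k →
        (i' : ℕ) + 2 = k → (j' : ℕ) = k →
        blk F u0' i j = blk F u0 i' j') ∧
      eta0Mat F k n * gammaMat F k n * u0 = u0' * etaMat F k n := by
  have ⟨hSp, hlow, hdiag, _, _, _, hy, hv⟩ := hu0
  refine ⟨etaMat F k n * u0 * (etaMat F k n)ᵀ,
    fun i j hij => by rw [blk_etaMat_conj, hu0.blk_etaIdx_eq_zero_of_lt hij, smul_zero],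
    fun i => by rw [blk_etaMat_conj, hdiag, etaSign_mul_self, one_smul],
    etaMat_conj_mem_SpB hSp, ?_, ?_, ?_, ?_, ?_, ?_⟩
  · intro i j i' j' hi hj hi' hj'
    rw [blk_etaMat_conj, hy _ _ i' j' (by simp only [etaIdx]; split_ifs <;> omega)
      (by simp only [etaIdx]; split_ifs <;> omega) hi' hj', etaSign_of_not_lt (by omega),
      etaSign_of_lt (by omega) (by omega), one_mul, neg_one_smul]
  · intro i j i' j' hi hi2 hj hii' hj'
    rw [blk_etaMat_conj, hv _ _ i' j' (by simp only [etaIdx]; split_ifs <;> omega)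
      (by simp only [etaIdx]; split_ifs <;> omega) (by simp only [etaIdx]; split_ifs <;> omega)
      (by simp only [etaIdx]; split_ifs <;> omega) hj', etaSign_of_lt hi (by omega),
      etaSign_of_lt (by omega) (by omega), neg_one_mul, neg_neg, one_smul]
  · intro i j hi hj
    rw [blk_etaMat_conj, hlow _ _ (by simp only [etaIdx]; split_ifs <;> omega), smul_zero]
  · intro i j i' j' hi _ hj hi' hj'
    exact blk_etaMat_conj_of_le hi (by omega)
      (Fin.ext (by simp only [etaIdx]; split_ifs <;> omega))
      (Fin.ext (by simp only [etaIdx]; split_ifs <;> omega))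
  · intro i j i' j' hi hj hi' hj'
    exact blk_etaMat_conj_of_le (by omega) (by omega)
      (Fin.ext (by simp only [etaIdx]; split_ifs <;> omega))
      (Fin.ext (by simp only [etaIdx]; split_ifs <;> omega))
  · rw [eta0Mat_mul_gammaMat, Matrix.mul_assoc _ _ (etaMat F k n), etaMat_transpose_mul_self,
      Matrix.mul_one]
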